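/- arXiv:2202.07982 — 3 statements merged into one kernel-verified Lean document; each statement's English description precedes it below -/
import Mathlib

section
/- Assume A1–A6 and CH. If S and S' are two functions on multiple scaled copies of Γ that are additive, extensive, and both characterize ≺ (i.e., for states of equal matter content, X ≺ Y iff S(X) ≤ S(Y), and similarly for S'), and there exist X₀ ≺≺ X₁ in Γ, then there exist constants a > 0 and B such that S'(X) = a·S(X) + B for all X ∈ Γ. -/
theorem entropy_unique_up_to_affine
    {Γ State : Type*} (ι : Γ → State)
    (prec : State → State → Prop)
    (comp : State → State → State)
    (scale : ℝ → State → State)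
    (A1 : ∀ X, prec X X)
    (A2 : ∀ X Y Z, prec X Y → prec Y Z → prec X Z)
    (A3 : ∀ X X' Y Y', prec X X' → prec Y Y' →
      prec (comp X Y) (comp X' Y'))
    (A4 : ∀ l : ℝ, 0 < l → ∀ X Y, prec X Y → prec (scale l X) (scale l Y))
    (A5 : ∀ l : ℝ, 0 < l → l < 1 → ∀ X,
      prec X (comp (scale (1 - l) X) (scale l X)) ∧
      prec (comp (scale (1 - l) X) (scale l X)) X)
    (A6 : ∀ X Y Z₀ Z₁,
      (∃ e : ℕ → ℝ, (∀ n, 0 < e n) ∧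
        Filter.Tendsto e Filter.atTop (nhds 0) ∧
        ∀ n, prec (comp X (scale (e n) Z₀)) (comp Y (scale (e n) Z₁))) →
      prec X Y)
    (mc : State → ℝ)
    (hmc_comp : ∀ X Y, mc (comp X Y) = mc X + mc Y)
    (hmc_scale : ∀ l : ℝ, 0 < l → ∀ X, mc (scale l X) = l * mc X)
    (hmc_ι : ∀ X : Γ, mc (ι X) = 1)
    (CH : ∀ X Y, mc X = mc Y → prec X Y ∨ prec Y X)
    (S S' : State → ℝ)
    (hS_add : ∀ X Y, S (comp X Y) = S X + S Y)
    (hS_ext : ∀ l : ℝ, 0 < l → ∀ X, S (scale l X) = l * S X)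
    (hS'_add : ∀ X Y, S' (comp X Y) = S' X + S' Y)
    (hS'_ext : ∀ l : ℝ, 0 < l → ∀ X, S' (scale l X) = l * S' X)
    (hS_char : ∀ X Y, mc X = mc Y → (prec X Y ↔ S X ≤ S Y))
    (hS'_char : ∀ X Y, mc X = mc Y → (prec X Y ↔ S' X ≤ S' Y))
    (X₀ X₁ : Γ)
    (href : prec (ι X₀) (ι X₁) ∧ ¬ prec (ι X₁) (ι X₀)) :
    ∃ a B : ℝ, 0 < a ∧ ∀ X : Γ, S' (ι X) = a * S (ι X) + B := by
  have hmc01 : mc (ι X₀) = mc (ι X₁) := by rw [hmc_ι, hmc_ι]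
  have hd : S (ι X₀) < S (ι X₁) := by
    have h1 : S (ι X₀) ≤ S (ι X₁) := (hS_char _ _ hmc01).mp href.1
    rcases lt_or_ge (S (ι X₀)) (S (ι X₁)) with h | h
    · exact h
    · exact absurd ((hS_char _ _ hmc01.symm).mpr h) href.2
  have hd' : S' (ι X₀) < S' (ι X₁) := by
    have h1 : S' (ι X₀) ≤ S' (ι X₁) := (hS'_char _ _ hmc01).mp href.1
    rcases lt_or_ge (S' (ι X₀)) (S' (ι X₁)) with h | h
    · exact h
    · exact absurd ((hS'_char _ _ hmc01.symm).mpr h) href.2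
  set s0 := S (ι X₀) with hs0
  set s1 := S (ι X₁) with hs1
  set t0 := S' (ι X₀) with ht0
  set t1 := S' (ι X₁) with ht1
  have hden : s1 - s0 ≠ 0 := by linarith
  refine ⟨(t1 - t0) / (s1 - s0), t0 - (t1 - t0) / (s1 - s0) * s0,
    div_pos (by linarith) (by linarith), fun X => ?_⟩
  set s := S (ι X) with hs
  set μ : ℝ := (|s - s0| + |s - s1|) / (s1 - s0) + 1 with hμ
  have hμpos : 0 < μ := by
    have : (0:ℝ) ≤ (|s - s0| + |s - s1|) / (s1 - s0) :=
      div_nonneg (by positivity) (by linarith)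
    rw [hμ]; linarith
  have hμ1 : μ * (s1 - s0) = |s - s0| + |s - s1| + (s1 - s0) := by
    rw [hμ]; field_simp
  have hA : -(s - s0) < μ * (s1 - s0) := by
    have := neg_abs_le (s - s0)
    have := abs_nonneg (s - s1)
    linarith
  have hB : s - s1 < μ * (s1 - s0) := by
    have := le_abs_self (s - s1)
    have := abs_nonneg (s - s0)
    linarith
  set c : ℝ := 1 + 2 * μ with hc
  have hcpos : 0 < c := by rw [hc]; linarith
  set l : ℝ := (s - s0 + μ * (s1 - s0)) / (c * (s1 - s0)) with hl
  have hcd : 0 < c * (s1 - s0) := mul_pos hcpos (by linarith)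
  have hlpos : 0 < l := div_pos (by linarith) hcd
  have hl1 : l < 1 := by
    rw [hl, div_lt_one hcd]
    nlinarith
  set p : ℝ := (1 - l) * c with hp
  set q : ℝ := l * c with hq
  have hppos : 0 < p := mul_pos (by linarith) hcpos
  have hqpos : 0 < q := mul_pos hlpos hcpos
  have hq1 : q * (s1 - s0) = s - s0 + μ * (s1 - s0) := by
    rw [hq, hl]; field_simp
  have hpq : p + q = c := by rw [hp, hq]; ring
  set W := comp (ι X) (comp (scale μ (ι X₀)) (scale μ (ι X₁))) with hW
  set Y := comp (scale p (ι X₀)) (scale q (ι X₁)) with hY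
  have hmcW : mc W = c := by
    rw [hW, hmc_comp, hmc_comp, hmc_scale μ hμpos, hmc_scale μ hμpos,
      hmc_ι, hmc_ι, hmc_ι, hc]; ring
  have hmcY : mc Y = c := by
    rw [hY, hmc_comp, hmc_scale p hppos, hmc_scale q hqpos, hmc_ι, hmc_ι]
    rw [mul_one, mul_one]; exact hpq
  have hmcWY : mc W = mc Y := by rw [hmcW, hmcY]
  have hSW : S W = s + μ * s0 + μ * s1 := by
    rw [hW, hS_add, hS_add, hS_ext μ hμpos, hS_ext μ hμpos]; ring
  have hSY : S Y = p * s0 + q * s1 := by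
    rw [hY, hS_add, hS_ext p hppos, hS_ext q hqpos]
  have hSeq : S W = S Y := by
    rw [hSW, hSY]
    have : p * s0 + q * s1 = c * s0 + q * (s1 - s0) := by
      rw [← hpq]; ring
    rw [this, hq1, hc]; ring
  have hWY : prec W Y := (hS_char W Y hmcWY).mpr (le_of_eq hSeq)
  have hYW : prec Y W := (hS_char Y W hmcWY.symm).mpr (le_of_eq hSeq.symm)
  have hS'eq : S' W = S' Y :=
    le_antisymm ((hS'_char W Y hmcWY).mp hWY) ((hS'_char Y W hmcWY.symm).mp hYW)
  have hS'W : S' W = S' (ι X) + μ * t0 + μ * t1 := by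
    rw [hW, hS'_add, hS'_add, hS'_ext μ hμpos, hS'_ext μ hμpos]; ring
  have hS'Y : S' Y = p * t0 + q * t1 := by
    rw [hY, hS'_add, hS'_ext p hppos, hS'_ext q hqpos]
  have hkey : S' (ι X) + μ * t0 + μ * t1 = p * t0 + q * t1 := by
    rw [← hS'W, ← hS'Y]; exact hS'eq
  have hkey2 : S' (ι X) = c * t0 + q * (t1 - t0) - μ * t0 - μ * t1 := by
    have : p * t0 + q * t1 = c * t0 + q * (t1 - t0) := by rw [← hpq]; ring
    linarith [hkey, this.symm ▸ hkey]
  -- q = (s - s0 + μ*(s1-s0)) / (s1-s0)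
  have hqval : q = (s - s0) / (s1 - s0) + μ := by
    field_simp at hq1 ⊢
    linarith [hq1]
  rw [hkey2, hqval, hc]
  field_simp
  ring
end

section
/- Let Γ be an open convex subset of ℝ^{n+1} and suppose ≺ satisfies transitivity and the convex-combination axiom A7: for X, Y ∈ Γ and t ∈ [0,1], (tX, (1−t)Y) ≺ tX + (1−t)Y, together with consistency and scaling invariance. Then for every X ∈ Γ the forward sector A_X = {Y ∈ Γ : X ≺ Y} is a convex subset of Γ. -/
/-- Under transitivity, consistency, scaling invariance, splitting/recombination
and the convex-combination axiom A7, the forward sector `A_X` of any state of a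
simple system is convex. -/
theorem forward_sector_convex
    {n : ℕ} {State : Type*}
    (Γ : Set (Fin (n + 1) → ℝ))
    (hΓopen : IsOpen Γ) (hΓconv : Convex ℝ Γ)
    (ι : (Fin (n + 1) → ℝ) → State)
    (prec : State → State → Prop)
    (comp : State → State → State)
    (scale : ℝ → State → State)
    (A2 : ∀ X Y Z, prec X Y → prec Y Z → prec X Z)
    (A3 : ∀ X X' Y Y', prec X X' → prec Y Y' →
      prec (comp X Y) (comp X' Y'))
    (A4 : ∀ l : ℝ, 0 < l → ∀ X Y, prec X Y → prec (scale l X) (scale l Y))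
    (A5 : ∀ l : ℝ, 0 < l → l < 1 → ∀ X,
      prec X (comp (scale (1 - l) X) (scale l X)) ∧
      prec (comp (scale (1 - l) X) (scale l X)) X)
    (A7 : ∀ X ∈ Γ, ∀ Y ∈ Γ, ∀ t : ℝ, 0 ≤ t → t ≤ 1 →
      prec (comp (scale t (ι X)) (scale (1 - t) (ι Y)))
        (ι (t • X + (1 - t) • Y))) :
    ∀ X ∈ Γ, Convex ℝ {Y | Y ∈ Γ ∧ prec (ι X) (ι Y)} := by
  intro X hX Y1 hY1 Y2 hY2 a b ha hb hab
  obtain ⟨hY1Γ, hp1⟩ := hY1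
  obtain ⟨hY2Γ, hp2⟩ := hY2
  refine ⟨hΓconv hY1Γ hY2Γ ha hb hab, ?_⟩
  rcases eq_or_lt_of_le ha with rfl | ha'
  · simp only [zero_add] at hab; subst hab; simpa using hp2
  rcases eq_or_lt_of_le hb with rfl | hb'
  · simp only [add_zero] at hab; subst hab; simpa using hp1
  have hb1 : b = 1 - a := by linarith
  subst hb1
  have ha1 : a < 1 := by linarith
  have h1 : prec (ι X) (comp (scale a (ι X)) (scale (1 - a) (ι X))) := by
    have := (A5 (1 - a) (by linarith) (by linarith) (ι X)).1
    simpa using this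
  have h2 : prec (comp (scale a (ι X)) (scale (1 - a) (ι X)))
      (comp (scale a (ι Y1)) (scale (1 - a) (ι Y2))) :=
    A3 _ _ _ _ (A4 a ha' _ _ hp1) (A4 (1 - a) (by linarith) _ _ hp2)
  have h3 := A7 Y1 hY1Γ Y2 hY2Γ a ha ha1.le
  exact A2 _ _ _ (A2 _ _ _ h1 h2) h3
end

section
/- Let Θ ↦ T(Θ) be defined by Planck's formula T(Θ) = T₀ exp(∫_{Θ₀}^{Θ} (∂P/∂Θ')_V / (P + (∂U/∂V)_{Θ'}) dΘ'), where U = U(Θ,V) and P = P(Θ,V) are C¹ functions such that dS = (1/T)dU + (P/T)dV is a closed 1-form when T is substituted. Then the integrand (∂P/∂Θ)_V / (P + (∂U/∂V)_Θ) is independent of V, i.e., its partial derivative with respect to V vanishes. -/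
set_option maxHeartbeats 1000000 in
/-- The integrand in Planck's formula for absolute temperature,
`(∂P/∂Θ)_V / (P + (∂U/∂V)_Θ)`, is independent of `V`: its partial derivative
with respect to `V` vanishes, whenever `dS = (1/T)dU + (P/T)dV` is closed for
a positive function `T` of `Θ` alone. -/
theorem planck_integrand_independent_of_V
    (D : Set (ℝ × ℝ))                       -- coordinates (Θ, V)
    (hD : IsOpen D) (hDsc : SimplyConnectedSpace D)
    (U P : ℝ → ℝ → ℝ)
    (hU : ContDiffOn ℝ 2 (fun p : ℝ × ℝ => U p.1 p.2) D)
    (hP : ContDiffOn ℝ 2 (fun p : ℝ × ℝ => P p.1 p.2) D)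
    (Uθ UV Pθ : ℝ → ℝ → ℝ)                  -- partial derivatives
    (hUθ : ∀ θ v, (θ, v) ∈ D → HasDerivAt (fun θ' => U θ' v) (Uθ θ v) θ)
    (hUV : ∀ θ v, (θ, v) ∈ D → HasDerivAt (fun v' => U θ v') (UV θ v) v)
    (hPθ : ∀ θ v, (θ, v) ∈ D → HasDerivAt (fun θ' => P θ' v) (Pθ θ v) θ)
    (T : ℝ → ℝ)
    (hT : ContDiff ℝ 1 T) (hTpos : ∀ θ, 0 < T θ)
    -- closedness of the 1-form (1/T) dU + (P/T) dV = (Uθ/T) dΘ + ((UV + P)/T) dV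
    (hclosed : ∀ θ v, (θ, v) ∈ D →
      deriv (fun v' => Uθ θ v' / T θ) v
        = deriv (fun θ' => (UV θ' v + P θ' v) / T θ') θ)
    (hne : ∀ θ v, (θ, v) ∈ D → P θ v + UV θ v ≠ 0) :
    ∀ θ v, (θ, v) ∈ D →
      deriv (fun v' => Pθ θ v' / (P θ v' + UV θ v')) v = 0 := by
  set F : ℝ × ℝ → ℝ := fun p => U p.1 p.2 with hF
  set G : ℝ × ℝ → (ℝ × ℝ →L[ℝ] ℝ) := fderiv ℝ F with hG
  have hGc : ContDiffOn ℝ 1 G D := hU.fderiv_of_isOpen hD (by norm_num)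
  -- identify Uθ and UV with fderiv applied to basis vectors, on D
  have hid1 : ∀ a b, (a, b) ∈ D → Uθ a b = G (a, b) (1, 0) := by
    intro a b hq
    have hFd : HasFDerivAt F (G (a, b)) (a, b) :=
      ((hU.contDiffAt (hD.mem_nhds hq)).differentiableAt (by norm_num)).hasFDerivAt
    have hline : HasDerivAt (fun θ' : ℝ => (θ', b)) ((1 : ℝ), (0 : ℝ)) a :=
      (hasDerivAt_id a).prodMk (hasDerivAt_const a b)
    have h := hFd.comp_hasDerivAt a hline
    exact (hUθ a b hq).unique h
  have hid2 : ∀ a b, (a, b) ∈ D → UV a b = G (a, b) (0, 1) := by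
    intro a b hq
    have hFd : HasFDerivAt F (G (a, b)) (a, b) :=
      ((hU.contDiffAt (hD.mem_nhds hq)).differentiableAt (by norm_num)).hasFDerivAt
    have hline : HasDerivAt (fun v' : ℝ => (a, v')) ((0 : ℝ), (1 : ℝ)) b :=
      (hasDerivAt_const b a).prodMk (hasDerivAt_id b)
    have h := hFd.comp_hasDerivAt b hline
    exact (hUV a b hq).unique h
  -- key pointwise identity
  have key : ∀ θ v, (θ, v) ∈ D → Pθ θ v / (P θ v + UV θ v) = deriv T θ / T θ := by
    intro θ v hp
    set M : ℝ × ℝ →L[ℝ] (ℝ × ℝ →L[ℝ] ℝ) := fderiv ℝ G (θ, v) with hM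
    have hGd : HasFDerivAt G M (θ, v) :=
      ((hGc.contDiffAt (hD.mem_nhds hp)).differentiableAt (by norm_num)).hasFDerivAt
    have hnb : ∀ᶠ q : ℝ × ℝ in nhds (θ, v), q ∈ D := hD.mem_nhds hp
    -- derivative of v' ↦ Uθ θ v' at v
    have hline1 : HasDerivAt (fun v' : ℝ => (θ, v')) ((0 : ℝ), (1 : ℝ)) v :=
      (hasDerivAt_const v θ).prodMk (hasDerivAt_id v)
    have h1 : HasDerivAt (fun v' => G (θ, v') (1, 0)) (M (0, 1) (1, 0)) v := by
      have hc := hGd.comp_hasDerivAt v hline1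
      have := hc.clm_apply (hasDerivAt_const v ((1 : ℝ), (0 : ℝ)))
      simpa using this
    have h1' : HasDerivAt (fun v' => Uθ θ v') (M (0, 1) (1, 0)) v := by
      apply h1.congr_of_eventuallyEq
      have hcont : Continuous (fun v' : ℝ => (θ, v')) := continuous_const.prodMk continuous_id
      filter_upwards [hcont.continuousAt.preimage_mem_nhds (hD.mem_nhds hp)] with v' hv'
      exact hid1 θ v' hv'
    -- derivative of θ' ↦ UV θ' v at θ
    have hline2 : HasDerivAt (fun θ' : ℝ => (θ', v)) ((1 : ℝ), (0 : ℝ)) θ :=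
      (hasDerivAt_id θ).prodMk (hasDerivAt_const θ v)
    have h2 : HasDerivAt (fun θ' => G (θ', v) (0, 1)) (M (1, 0) (0, 1)) θ := by
      have hc := hGd.comp_hasDerivAt θ hline2
      have := hc.clm_apply (hasDerivAt_const θ ((0 : ℝ), (1 : ℝ)))
      simpa using this
    have h2' : HasDerivAt (fun θ' => UV θ' v) (M (1, 0) (0, 1)) θ := by
      apply h2.congr_of_eventuallyEq
      have hcont : Continuous (fun θ' : ℝ => (θ', v)) := continuous_id.prodMk continuous_const
      filter_upwards [hcont.continuousAt.preimage_mem_nhds (hD.mem_nhds hp)] with θ' hθ'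
      exact hid2 θ' v hθ'
    -- symmetry of second derivative
    have hsym : M (0, 1) (1, 0) = M (1, 0) (0, 1) := by
      have hsd := (hU.contDiffAt (hD.mem_nhds hp)).isSymmSndFDerivAt (by norm_num)
      exact hsd (0, 1) (1, 0)
    have Tne : T θ ≠ 0 := (hTpos θ).ne'
    have hT' : HasDerivAt T (deriv T θ) θ :=
      ((hT.differentiable (by norm_num)) θ).hasDerivAt
    -- compute both sides of hclosed
    have hL : HasDerivAt (fun v' => Uθ θ v' / T θ) (M (0, 1) (1, 0) / T θ) v :=
      h1'.div_const (T θ)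
    have hR : HasDerivAt (fun θ' => (UV θ' v + P θ' v) / T θ')
        (((M (1, 0) (0, 1) + Pθ θ v) * T θ - (UV θ v + P θ v) * deriv T θ) / T θ ^ 2) θ :=
      (h2'.add (hPθ θ v hp)).div hT' Tne
    have heq := hclosed θ v hp
    rw [hL.deriv, hR.deriv] at heq
    rw [hsym] at heq
    have hPUne := hne θ v hp
    field_simp at heq ⊢
    have h4 : (Pθ θ v * T θ - (UV θ v + P θ v) * deriv T θ) * T θ = 0 := by
      linear_combination (-T θ) * heq
    have h3 : Pθ θ v * T θ = (UV θ v + P θ v) * deriv T θ := by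
      rcases mul_eq_zero.mp h4 with h | h
      · linarith [sub_eq_zero.mp h]
      · exact absurd h Tne
    linear_combination h3
  -- conclude
  intro θ v hp
  have hveq : (fun v' => Pθ θ v' / (P θ v' + UV θ v')) =ᶠ[nhds v]
      (fun _ => deriv T θ / T θ) := by
    have hcont : Continuous (fun v' : ℝ => (θ, v')) := continuous_const.prodMk continuous_id
    filter_upwards [hcont.continuousAt.preimage_mem_nhds (hD.mem_nhds hp)] with v' hv'
    exact key θ v' hv'
  rw [hveq.deriv_eq, deriv_const]
end
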